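/- Let M < N. For every Ω in the Stiefel manifold St(N, M) there exist nonzero vectors v^(1), …, v^(M) ∈ ℝ^N such that Ω = [I; 0] − U S⁻¹ U₁ᵀ, where U ∈ ℝ^{N×M} is the matrix whose l-th column is v^(l)/‖v^(l)‖₂, U₁ is the upper M×M submatrix of U, S = (1/2)I + striu(UᵀU), and [I; 0] denotes the N×M matrix consisting of the M×M identity stacked above an (N−M)×M zero block. That is, the truncated CWY map γ(v^(1),…,v^(M)) = [I; 0] − U S⁻¹ U₁ᵀ is a surjection onto St(N, M). -/

import Mathlib

open scoped BigOperators Matrix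

/-- `striu M` zeroes out all diagonal and lower-triangular entries of `M`. -/
def striu {L : ℕ} (M : Matrix (Fin L) (Fin L) ℝ) : Matrix (Fin L) (Fin L) ℝ :=
  fun i j => if i < j then M i j else 0

/-- The truncated CWY map `γ(v⁽¹⁾, …, v⁽ᴹ⁾) = [I; 0] - U S⁻¹ U₁ᵀ`, where `U` is the `N × M`
matrix with columns `v⁽ˡ⁾/‖v⁽ˡ⁾‖₂`, `U₁` is the upper `M × M` submatrix of `U` and
`S = ½ I + striu(UᵀU)`. -/
noncomputable def tcwy {M N : ℕ} (hMN : M < N) (v : Fin M → Fin N → ℝ) :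
    Matrix (Fin N) (Fin M) ℝ :=
  let U : Matrix (Fin N) (Fin M) ℝ := fun i l => v l i / Real.sqrt (∑ k, v l k ^ 2)
  let U₁ : Matrix (Fin M) (Fin M) ℝ := fun i l => U (Fin.castLE hMN.le i) l
  let S : Matrix (Fin M) (Fin M) ℝ := (1 / 2 : ℝ) • (1 : Matrix (Fin M) (Fin M) ℝ)
    + striu (Uᵀ * U)
  let incl : Matrix (Fin N) (Fin M) ℝ := fun i j => if (i : ℕ) = (j : ℕ) then 1 else 0
  incl - U * S⁻¹ * U₁ᵀ

/-!
Householder QR: the `k`-th reflection `H(u) = I - 2uuᵀ` of a chain maps the current `k`-th column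
of `Ω` to `e_k` and fixes `e_0, …, e_{k-1}`, so `Ω = H(u₀) ⋯ H(u_{M-1}) [I; 0]` with unit vectors
`u_l`. When the column already equals `e_k` one reflects in `e_{k+1}` instead, which exists because
`M < N`. Compact WY: for `W` with `W S = U`, the `k`-th column of `W` is `2 Q_k u_k`, where
`Q_k = I - W diag(1, …, 1, 0, …, 0) Uᵀ` (`k` ones) is the partial product `H(u₀) ⋯ H(u_{k-1})`;
by induction `H(u₀) ⋯ H(u_{M-1}) = I - U S⁻¹ Uᵀ`, and `Uᵀ [I; 0] = U₁ᵀ`.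
-/

open Matrix

section Householder

variable {n : Type*} [Fintype n] [DecidableEq n]

noncomputable def householder (w : n → ℝ) : Matrix n n ℝ := 1 - (2 : ℝ) • vecMulVec w w

lemma householder_mulVec (w x : n → ℝ) :
    householder w *ᵥ x = x - (2 * (w ⬝ᵥ x)) • w := by
  simp [householder, sub_mulVec, smul_mulVec, vecMulVec_mulVec, smul_smul]

omit [Fintype n] in
lemma householder_transpose (w : n → ℝ) : (householder w)ᵀ = householder w := by
  simp [householder, transpose_vecMulVec]

lemma householder_mul_self {w : n → ℝ} (hw : w ⬝ᵥ w = 1) :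
    householder w * householder w = 1 := by
  nth_rewrite 2 [householder]
  rw [mul_sub, mul_one, Matrix.mul_smul, mul_vecMulVec, householder_mulVec, hw, householder,
    sub_vecMulVec, smul_vecMulVec]
  module

lemma householder_mulVec_of_dotProduct_eq_zero {w x : n → ℝ} (h : w ⬝ᵥ x = 0) :
    householder w *ᵥ x = x := by
  simp [householder_mulVec, h]

lemma exists_householder_smul_sub_mulVec_eq {x y : n → ℝ} (hxy : x ⬝ᵥ x = y ⬝ᵥ y)
    (hne : x ≠ y) :
    ∃ c : ℝ, (c • (x - y)) ⬝ᵥ (c • (x - y)) = 1 ∧ householder (c • (x - y)) *ᵥ x = y := by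
  set t := (x - y) ⬝ᵥ (x - y) with ht_def
  have ht : 0 < t := lt_of_le_of_ne (Finset.sum_nonneg fun i _ => mul_self_nonneg _)
    (Ne.symm (dotProduct_self_eq_zero.not.mpr (sub_ne_zero.mpr hne)))
  have hxt : (x - y) ⬝ᵥ x = t / 2 := by
    simp only [ht_def, sub_dotProduct, dotProduct_sub, dotProduct_comm y x, hxy]; ring
  refine ⟨(Real.sqrt t)⁻¹, ?_, ?_⟩
  · simp only [smul_dotProduct, dotProduct_smul, smul_eq_mul, ← mul_assoc, ← ht_def]
    rw [← mul_inv, Real.mul_self_sqrt ht.le, inv_mul_cancel₀ ht.ne']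
  · have hscalar : 2 * ((Real.sqrt t)⁻¹ * (t / 2)) * (Real.sqrt t)⁻¹ = 1 := by
      field_simp
      rw [Real.sq_sqrt ht.le]
    rw [householder_mulVec, smul_dotProduct, hxt, smul_smul, smul_eq_mul, hscalar, one_smul,
      sub_sub_cancel]

-- `z` serves as the mirror when `x = y`, where `x - y` gives no reflection.
lemma exists_householder_mulVec_eq {x y z : n → ℝ} (hxy : x ⬝ᵥ x = y ⬝ᵥ y)
    (hz : z ⬝ᵥ z = 1) (hzy : z ⬝ᵥ y = 0) :
    ∃ w, w ⬝ᵥ w = 1 ∧ householder w *ᵥ x = y ∧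
      ∀ p, x ⬝ᵥ p = 0 → y ⬝ᵥ p = 0 → z ⬝ᵥ p = 0 → householder w *ᵥ p = p := by
  by_cases hne : x = y
  · subst hne
    exact ⟨z, hz, householder_mulVec_of_dotProduct_eq_zero hzy,
      fun p _ _ hzp => householder_mulVec_of_dotProduct_eq_zero hzp⟩
  · obtain ⟨c, hc, hcx⟩ := exists_householder_smul_sub_mulVec_eq hxy hne
    refine ⟨c • (x - y), hc, hcx, fun p hxp hyp _ => ?_⟩
    exact householder_mulVec_of_dotProduct_eq_zero (by simp [sub_dotProduct, hxp, hyp])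

noncomputable def householderProd (u : ℕ → n → ℝ) : ℕ → Matrix n n ℝ
  | 0 => 1
  | k + 1 => householderProd u k * householder (u k)

lemma householderProd_congr {u u' : ℕ → n → ℝ} {k : ℕ} (h : ∀ l < k, u l = u' l) :
    householderProd u k = householderProd u' k := by
  induction k with
  | zero => rfl
  | succ k ih =>
    rw [householderProd, householderProd, ih fun l hl => h l (by omega), h k k.lt_succ_self]

end Householder

lemma col_mul_eq_mulVec {l m n : Type*} [Fintype m] (A : Matrix l m ℝ) (B : Matrix m n ℝ)
    (j : n) : (A * B).col j = A *ᵥ B.col j := rfl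

lemma mul_single_one_mul {l m p : Type*} [Fintype m] [DecidableEq m] (A : Matrix l m ℝ)
    (B : Matrix m p ℝ) (i : m) :
    A * single i i (1 : ℝ) * B = vecMulVec (A.col i) (B.row i) := by
  rw [single_eq_single_vecMulVec_single, mul_vecMulVec, vecMulVec_mul, mulVec_single_one,
    single_one_vecMul]

section QR

variable {M N : ℕ}

def stackedIdentity (N M : ℕ) : Matrix (Fin N) (Fin M) ℝ :=
  fun i j => if (i : ℕ) = (j : ℕ) then 1 else 0

lemma mul_stackedIdentity {l : Type*} (h : M ≤ N) (A : Matrix l (Fin N) ℝ) :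
    A * stackedIdentity N M = A.submatrix id (Fin.castLE h) := by
  ext a j
  have hcond : ∀ p : Fin N, (p : ℕ) = (j : ℕ) ↔ p = Fin.castLE h j := by simp [Fin.ext_iff]
  simp [stackedIdentity, mul_apply, hcond]

lemma exists_householder_mul_col_eq (hMN : M < N) {Ψ : Matrix (Fin N) (Fin M) ℝ}
    (hΨ : Ψᵀ * Ψ = 1) {k : ℕ} (hk : k < M)
    (hcols : ∀ j : Fin M, (j : ℕ) < k → Ψ.col j = Pi.single (Fin.castLE hMN.le j) 1) :
    ∃ w : Fin N → ℝ, w ⬝ᵥ w = 1 ∧ ∀ j : Fin M, (j : ℕ) ≤ k →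
      (householder w * Ψ).col j = Pi.single (Fin.castLE hMN.le j) 1 := by
  have hdot : ∀ a b, Ψ.col a ⬝ᵥ Ψ.col b = (1 : Matrix (Fin M) (Fin M) ℝ) a b := fun a b => by
    rw [← hΨ]; rfl
  set κ : Fin M := ⟨k, hk⟩
  obtain ⟨w, hw, hwx, hfix⟩ := exists_householder_mulVec_eq (x := Ψ.col κ)
    (y := Pi.single (Fin.castLE hMN.le κ) 1) (z := Pi.single ⟨k + 1, by omega⟩ 1)
    (by rw [hdot]; simp) (by simp) (by simp [Fin.ext_iff, κ])
  refine ⟨w, hw, fun j hj => ?_⟩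
  rw [col_mul_eq_mulVec]
  rcases hj.lt_or_eq with hlt | heq
  · have hjκ : κ ≠ j := by simp [κ, Fin.ext_iff]; omega
    rw [hcols j hlt]
    apply hfix
    · rw [← hcols j hlt, hdot, one_apply_ne hjκ]
    · simp [Pi.single_apply, Fin.ext_iff, κ]; omega
    · simp [Pi.single_apply, Fin.ext_iff]; omega
  · obtain rfl : j = κ := Fin.ext heq
    exact hwx

lemma exists_householderProd_mul_of_le (hMN : M < N) {Ω : Matrix (Fin N) (Fin M) ℝ}
    (hΩ : Ωᵀ * Ω = 1) {k : ℕ} (hk : k ≤ M) :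
    ∃ (u : ℕ → Fin N → ℝ) (Ψ : Matrix (Fin N) (Fin M) ℝ), (∀ l < k, u l ⬝ᵥ u l = 1) ∧
      Ψᵀ * Ψ = 1 ∧ (∀ j : Fin M, (j : ℕ) < k → Ψ.col j = Pi.single (Fin.castLE hMN.le j) 1) ∧
      Ω = householderProd u k * Ψ := by
  induction k with
  | zero => exact ⟨0, Ω, by simp, hΩ, by simp, (Matrix.one_mul Ω).symm⟩
  | succ k ih =>
    obtain ⟨u, Ψ, hu, hΨ, hcols, hΩΨ⟩ := ih (by omega)
    obtain ⟨w, hw, hwcols⟩ := exists_householder_mul_col_eq hMN hΨ (by omega) hcols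
    have hHH : householder w * (householder w * Ψ) = Ψ := by
      rw [← Matrix.mul_assoc, householder_mul_self hw, Matrix.one_mul]
    have hprod : householderProd (Function.update u k w) (k + 1) =
        householderProd u k * householder w := by
      rw [householderProd, Function.update_self,
        householderProd_congr fun l hl => Function.update_of_ne (Nat.ne_of_lt hl) _ _]
    refine ⟨Function.update u k w, householder w * Ψ, fun l hl => ?_, ?_,
      fun j hj => hwcols j (by omega), ?_⟩
    · rcases (Nat.lt_succ_iff.mp hl).lt_or_eq with hlt | rfl
      · rw [Function.update_of_ne hlt.ne]; exact hu l hlt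
      · rwa [Function.update_self]
    · rw [transpose_mul, householder_transpose, Matrix.mul_assoc, hHH, hΨ]
    · rw [hprod, Matrix.mul_assoc, hHH, hΩΨ]

theorem exists_householderProd_mul_stackedIdentity (hMN : M < N)
    {Ω : Matrix (Fin N) (Fin M) ℝ} (hΩ : Ωᵀ * Ω = 1) :
    ∃ u : ℕ → Fin N → ℝ, (∀ l < M, u l ⬝ᵥ u l = 1) ∧
      Ω = householderProd u M * stackedIdentity N M := by
  obtain ⟨u, Ψ, hu, -, hcols, hΩΨ⟩ := exists_householderProd_mul_of_le hMN hΩ le_rfl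
  refine ⟨u, hu, ?_⟩
  convert hΩΨ using 2
  ext i j
  rw [← col_apply Ψ, hcols j j.isLt]
  simp [stackedIdentity, Pi.single_apply, Fin.ext_iff]

end QR

section CWY

variable {n : Type*} [Fintype n] [DecidableEq n] {M : ℕ}

def matrixOfColumns (M : ℕ) (u : ℕ → n → ℝ) : Matrix n (Fin M) ℝ := (of fun l : Fin M => u l)ᵀ

noncomputable def cwyS (U : Matrix n (Fin M) ℝ) : Matrix (Fin M) (Fin M) ℝ :=
  (1 / 2 : ℝ) • (1 : Matrix (Fin M) (Fin M) ℝ) + striu (Uᵀ * U)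

omit [DecidableEq n] in
lemma cwyS_isUpperTriangular (U : Matrix n (Fin M) ℝ) : (cwyS U).IsUpperTriangular := by
  intro i j (hji : j < i)
  simp [cwyS, striu, one_apply_ne hji.ne', not_lt_of_gt hji]

omit [DecidableEq n] in
lemma isUnit_det_cwyS (U : Matrix n (Fin M) ℝ) : IsUnit (cwyS U).det := by
  rw [det_of_isUpperTriangular (cwyS_isUpperTriangular U)]
  simp [cwyS, striu]

def prefixProjection (M k : ℕ) : Matrix (Fin M) (Fin M) ℝ :=
  diagonal fun a => if (a : ℕ) < k then 1 else 0

lemma householderProd_eq_one_sub_of_mul_cwyS_eq (u : ℕ → n → ℝ) {W : Matrix n (Fin M) ℝ}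
    (hW : W * cwyS (matrixOfColumns M u) = matrixOfColumns M u) {k : ℕ} (hk : k ≤ M) :
    householderProd u k = 1 - W * prefixProjection M k * (matrixOfColumns M u)ᵀ := by
  induction k with
  | zero => simp [householderProd, prefixProjection]
  | succ k ih =>
    set U := matrixOfColumns M u
    set D := prefixProjection M k
    set E := single (⟨k, hk⟩ : Fin M) (⟨k, hk⟩ : Fin M) (1 : ℝ)
    have hD : prefixProjection M (k + 1) = D + E := by
      ext a b
      simp only [D, E, prefixProjection, Matrix.add_apply, diagonal_apply, single_apply,
        Fin.ext_iff]
      split_ifs <;> (try norm_num) <;> omega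
    have hH : householder (u k) = 1 - (2 : ℝ) • (U * E * Uᵀ) := by
      rw [householder, mul_single_one_mul]; rfl
    have hstriu : D * (Uᵀ * U) * E = (cwyS U - (1 / 2 : ℝ) • 1) * E := by
      rw [cwyS, add_sub_cancel_left]
      ext a b
      by_cases hb : b = ⟨k, hk⟩
      · subst hb
        simp [D, E, prefixProjection, striu, diagonal_mul, Fin.lt_def]
      · simp [E, hb]
    have hQU : (1 - W * D * Uᵀ) * U * E = (1 / 2 : ℝ) • (W * E) := by
      calc (1 - W * D * Uᵀ) * U * E = U * E - W * (D * (Uᵀ * U) * E) := by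
            simp only [Matrix.sub_mul, Matrix.one_mul, Matrix.mul_assoc]
        _ = (1 / 2 : ℝ) • (W * E) := by
          rw [hstriu, Matrix.sub_mul, Matrix.mul_sub, ← Matrix.mul_assoc W (cwyS U), hW,
            Matrix.smul_mul, Matrix.one_mul, Matrix.mul_smul]
          abel
    calc householderProd u (k + 1) = (1 - W * D * Uᵀ) * (1 - (2 : ℝ) • (U * E * Uᵀ)) := by
          rw [householderProd, ih (by omega), hH]
      _ = (1 - W * D * Uᵀ) - (2 : ℝ) • ((1 - W * D * Uᵀ) * U * E * Uᵀ) := by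
          simp only [Matrix.mul_sub, Matrix.mul_one, Matrix.mul_smul, Matrix.mul_assoc]
      _ = 1 - W * prefixProjection M (k + 1) * Uᵀ := by
          rw [hQU, Matrix.smul_mul, smul_smul, hD, Matrix.mul_add, Matrix.add_mul]
          norm_num
          abel

theorem householderProd_eq_one_sub_cwy (u : ℕ → n → ℝ) :
    householderProd u M = 1 - matrixOfColumns M u * (cwyS (matrixOfColumns M u))⁻¹ *
      (matrixOfColumns M u)ᵀ := by
  set U := matrixOfColumns M u
  have hW : U * (cwyS U)⁻¹ * cwyS U = U := by
    rw [Matrix.mul_assoc, nonsing_inv_mul _ (isUnit_det_cwyS U), Matrix.mul_one]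
  have hP : prefixProjection M M = 1 := by
    ext a b
    simp [prefixProjection, diagonal_apply, one_apply]
  rw [householderProd_eq_one_sub_of_mul_cwyS_eq u hW le_rfl, hP, Matrix.mul_one]

end CWY

lemma tcwy_eq_of_forall_dotProduct_self_eq_one {M N : ℕ} (hMN : M < N)
    {v : Fin M → Fin N → ℝ} (hv : ∀ l, v l ⬝ᵥ v l = 1) :
    tcwy hMN v = stackedIdentity N M -
      (of v)ᵀ * (cwyS (of v)ᵀ)⁻¹ * ((of v)ᵀᵀ * stackedIdentity N M) := by
  have hnormalize : ∀ l i, v l i / Real.sqrt (∑ k, v l k ^ 2) = v l i := fun l i => by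
    have : ∑ k, v l k ^ 2 = 1 := by simpa [dotProduct, sq] using hv l
    simp [this]
  rw [mul_stackedIdentity hMN.le]
  simp only [tcwy, hnormalize]
  rfl

/-- Surjectivity of the truncated CWY map onto the Stiefel manifold `St(N, M)` for `M < N`:
every `Ω` with `ΩᵀΩ = I` equals `γ(v⁽¹⁾, …, v⁽ᴹ⁾)` for some nonzero vectors
`v⁽¹⁾, …, v⁽ᴹ⁾ ∈ ℝᴺ`. -/
theorem tcwy_surjective {M N : ℕ} (hMN : M < N)
    (Ω : Matrix (Fin N) (Fin M) ℝ) (hΩ : Ωᵀ * Ω = 1) :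
    ∃ v : Fin M → Fin N → ℝ, (∀ l, v l ≠ 0) ∧ Ω = tcwy hMN v := by
  obtain ⟨u, hu, rfl⟩ := exists_householderProd_mul_stackedIdentity hMN hΩ
  refine ⟨fun l => u l, fun l h => by simpa [h] using hu l l.isLt, ?_⟩
  rw [tcwy_eq_of_forall_dotProduct_self_eq_one hMN fun l => hu l l.isLt,
    householderProd_eq_one_sub_cwy, Matrix.sub_mul, Matrix.one_mul, Matrix.mul_assoc]
  rfl
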